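/- For every integer ℓ ≥ 1 and every x ∈ [−1,1], the Legendre polynomials satisfy (1 − P_{2ℓ}(x)) / (2ℓ(2ℓ+1)) ≤ (1 − P₂(x)) / 6. (Here 2ℓ(2ℓ+1) and 6 are the eigenvalues λ_{2ℓ} and λ₂ of the Laplacian on the 2-sphere.) -/

import Mathlib

noncomputable section

/-- The `n`-th Legendre polynomial, via Rodrigues' formula, normalized so that `P_n(1) = 1`. -/
noncomputable def legendreP (n : ℕ) (x : ℝ) : ℝ :=
  (1 / (2 ^ n * (n.factorial : ℝ))) * iteratedDeriv n (fun y => (y ^ 2 - 1) ^ n) x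

namespace LegendreAux

open Polynomial

noncomputable def Rpoly (n : ℕ) : Polynomial ℝ := derivative^[n] ((X^2 - 1)^n)

noncomputable def Lpoly (n : ℕ) : Polynomial ℝ :=
  C (1 / (2 ^ n * (n.factorial : ℝ))) * Rpoly n

lemma iteratedDeriv_eval (p : Polynomial ℝ) (n : ℕ) :
    iteratedDeriv n (fun y : ℝ => p.eval y) = fun y => (derivative^[n] p).eval y := by
  induction n generalizing p with
  | zero => simp
  | succ n ih =>
    rw [iteratedDeriv_succ', Function.iterate_succ_apply]
    rw [show (_root_.deriv fun y : ℝ => p.eval y) = fun y => (derivative p).eval y from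
      funext fun y => Polynomial.deriv p]
    exact ih _

lemma legendreP_eq (n : ℕ) (x : ℝ) : legendreP n x = (Lpoly n).eval x := by
  unfold legendreP Lpoly Rpoly
  have h : (fun y : ℝ => (y ^ 2 - 1) ^ n) = fun y => ((X^2-1)^n : Polynomial ℝ).eval y := by
    funext y; simp
  rw [h, iteratedDeriv_eval]
  simp [mul_comm]

lemma X_leibniz (f : Polynomial ℝ) (n : ℕ) :
    derivative^[n+1] (X * f) =
      X * derivative^[n+1] f + C ((n:ℝ)+1) * derivative^[n] f := by
  induction n with
  | zero =>
    simp only [Function.iterate_one, Function.iterate_zero, id_eq, derivative_mul,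
      derivative_X, Nat.cast_zero, zero_add, map_one, one_mul]
    ring
  | succ n ih =>
    have h := congrArg derivative ih
    rw [← Function.iterate_succ_apply' derivative (n+1)] at h
    simp only [Nat.succ_eq_add_one] at h
    rw [h]
    simp only [derivative_add, derivative_mul, derivative_C_mul, derivative_X, one_mul]
    simp only [Function.iterate_succ_apply' derivative (n+1), Function.iterate_succ_apply' derivative n]
    generalize derivative^[n] f = g
    simp only [Nat.cast_succ, map_add, map_one, derivative_C, derivative_one, derivative_add,
      derivative_ofNat, map_zero, zero_mul, mul_zero, add_zero]
    ring

lemma u_leibniz (f : Polynomial ℝ) (n : ℕ) :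
    derivative^[n+2] ((X^2 - 1) * f) =
      (X^2-1) * derivative^[n+2] f + C (2*((n:ℝ)+2)) * (X * derivative^[n+1] f)
        + C (((n:ℝ)+2)*((n:ℝ)+1)) * derivative^[n] f := by
  induction n with
  | zero =>
    show derivative (derivative ((X^2-1)*f)) = _
    simp only [Function.iterate_succ_apply', Function.iterate_zero, Function.iterate_one, id_eq]
    simp only [derivative_mul, derivative_sub, derivative_one, derivative_X_pow, derivative_X,
      derivative_add, one_mul, mul_one]
    simp only [Nat.cast_zero, Nat.cast_ofNat, map_mul, map_add, map_ofNat, map_one, zero_add,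
      Nat.cast_one]
    ring_nf
    simp [C_eq_natCast]
  | succ n ih =>
    have h := congrArg derivative ih
    rw [← Function.iterate_succ_apply' derivative (n+2)] at h
    simp only [Nat.succ_eq_add_one] at h
    rw [show n+1+2 = n+2+1 from rfl, h]
    simp only [derivative_add, derivative_mul, derivative_C_mul, derivative_X, derivative_sub,
      derivative_one, derivative_X_pow, one_mul, mul_one]
    simp only [show n+2+1 = (n+1)+1+1 from rfl, show n+2 = (n+1)+1 from rfl]
    simp only [Function.iterate_succ_apply' derivative (n+1+1),
      Function.iterate_succ_apply' derivative (n+1), Function.iterate_succ_apply' derivative n]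
    generalize derivative^[n] f = g
    simp only [Nat.cast_succ, map_add, map_one, map_mul, map_ofNat, Nat.cast_ofNat,
      derivative_C, derivative_one, derivative_add, derivative_ofNat, map_zero, zero_mul,
      mul_zero, add_zero, derivative_mul, derivative_C_mul, C_0, Nat.cast_zero]
    ring

lemma R_succ (n : ℕ) :
    Rpoly (n+1) = C 2 * ((X^2-1) * derivative (Rpoly n))
      + C (2*((n:ℝ)+1)) * (X * Rpoly n) := by
  cases n with
  | zero =>
    have h1 : Rpoly 1 = derivative ((X^2-1)^1 : Polynomial ℝ) := rfl
    have h0 : Rpoly 0 = 1 := by unfold Rpoly; simp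
    rw [h1, h0]
    simp only [pow_one, derivative_sub, derivative_one, derivative_X_pow, derivative_X,
      derivative_one, sub_zero, Nat.cast_ofNat, Nat.cast_zero, zero_add, mul_one, map_ofNat,
      map_one, map_zero, Nat.cast_one, pow_one]
    ring
  | succ m =>
    have hd : derivative (((X:Polynomial ℝ)^2 - 1)^(m+2))
        = C (2*((m:ℝ)+2)) * (X * ((X^2-1))^(m+1)) := by
      rw [derivative_pow]
      simp only [derivative_sub, derivative_one, derivative_X_pow, derivative_X, sub_zero,
        Nat.cast_ofNat, pow_one, mul_one, Nat.add_sub_cancel]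
      push_cast
      simp only [map_add, map_mul, map_ofNat, map_one]
      ring
    have eq1 : Rpoly (m+2) = C (2*((m:ℝ)+2)) * (X * Rpoly (m+1)
        + C ((m:ℝ)+1) * derivative^[m] (((X:Polynomial ℝ)^2-1)^(m+1))) := by
      unfold Rpoly
      rw [show m+1+1 = m+2 from rfl]
      rw [Function.iterate_succ_apply, hd, Polynomial.iterate_derivative_C_mul,
        X_leibniz]
    have eq2 : Rpoly (m+2) = (X^2-1) * derivative (Rpoly (m+1))
        + C (2*((m:ℝ)+2)) * (X * Rpoly (m+1))
        + C (((m:ℝ)+2)*((m:ℝ)+1)) * derivative^[m] (((X:Polynomial ℝ)^2-1)^(m+1)) := by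
      unfold Rpoly
      rw [show m+1+1 = m+2 from rfl]
      rw [show (((X:Polynomial ℝ)^2-1)^(m+2)) = (X^2-1) * ((X^2-1))^(m+1) by ring]
      rw [u_leibniz]
      rw [← Function.iterate_succ_apply' derivative (m+1)]
    rw [show m+1+1 = m+2 from rfl]
    set S := derivative^[m] (((X:Polynomial ℝ)^2-1)^(m+1)) with hS
    simp only [map_add, map_mul, map_ofNat, map_one, Nat.cast_succ] at eq1 eq2 ⊢
    linear_combination 2 * eq2 - eq1

lemma dR_succ (n : ℕ) :
    derivative (Rpoly (n+1)) =
      C (2*((n:ℝ)+1)) * (X * derivative (Rpoly n) + C ((n:ℝ)+1) * Rpoly n) := by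
  have hd : derivative (((X:Polynomial ℝ)^2 - 1)^(n+1))
      = C (2*((n:ℝ)+1)) * (X * ((X^2-1))^n) := by
    rw [derivative_pow]
    simp only [derivative_sub, derivative_one, derivative_X_pow, derivative_X, sub_zero,
      Nat.cast_ofNat, pow_one, mul_one, Nat.add_sub_cancel]
    push_cast
    simp only [map_add, map_mul, map_ofNat, map_one]
    ring
  unfold Rpoly
  rw [← Function.iterate_succ_apply' derivative (n+1), Function.iterate_succ_apply, hd,
    Polynomial.iterate_derivative_C_mul, X_leibniz,
    ← Function.iterate_succ_apply' derivative n]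

lemma hc (n : ℕ) :
    (1 / (2 ^ (n+1) * ((n+1).factorial : ℝ))) * (((n:ℝ)+1) * 2) = 1 / (2^n * n.factorial) := by
  rw [Nat.factorial_succ]
  have h1 : (n.factorial : ℝ) ≠ 0 := Nat.cast_ne_zero.2 n.factorial_ne_zero
  have h2 : ((n:ℝ)+1) ≠ 0 := by positivity
  push_cast
  field_simp
  ring

lemma L_star (n : ℕ) :
    C ((n:ℝ)+1) * Lpoly (n+1) =
      (X^2-1) * derivative (Lpoly n) + C ((n:ℝ)+1) * (X * Lpoly n) := by
  unfold Lpoly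
  rw [derivative_C_mul, R_succ]
  have hC : C (1 / (2 ^ (n+1) * (((n+1).factorial : ℕ)) : ℝ)) * (C ((n:ℝ)+1) * C 2)
      = C (1 / (2^n * (n.factorial:ℕ) : ℝ)) := by
    rw [← map_mul, ← map_mul]
    exact congrArg C (by rw [← hc n])
  set a := (1 / (2 ^ (n+1) * (((n+1).factorial : ℕ)) : ℝ)) with ha
  set b := (1 / (2^n * (n.factorial:ℕ) : ℝ)) with hb
  simp only [map_add, map_mul, map_ofNat, map_one, Nat.cast_succ, derivative_C_mul] at hC ⊢
  linear_combination ((X^2-1) * derivative (Rpoly n) + ((C (n:ℝ)) + 1) * (X * Rpoly n)) * hC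

lemma L_dstar (n : ℕ) :
    derivative (Lpoly (n+1)) = X * derivative (Lpoly n) + C ((n:ℝ)+1) * Lpoly n := by
  unfold Lpoly
  rw [derivative_C_mul, dR_succ]
  have hC : C (1 / (2 ^ (n+1) * (((n+1).factorial : ℕ)) : ℝ)) * (C ((n:ℝ)+1) * C 2)
      = C (1 / (2^n * (n.factorial:ℕ) : ℝ)) := by
    rw [← map_mul, ← map_mul]
    exact congrArg C (by rw [← hc n])
  simp only [map_add, map_mul, map_ofNat, map_one, Nat.cast_succ, derivative_C_mul] at hC ⊢
  linear_combination (X * derivative (Rpoly n) + ((C (n:ℝ)) + 1) * Rpoly n) * hC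

lemma ode (n : ℕ) :
    (1 - X^2) * derivative (derivative (Lpoly n)) - C 2 * (X * derivative (Lpoly n))
      + C ((n:ℝ)*((n:ℝ)+1)) * Lpoly n = 0 := by
  have h1 := congrArg derivative (L_star n)
  simp only [derivative_C_mul, derivative_add, derivative_mul, derivative_sub, derivative_one,
    derivative_X_pow, derivative_X, one_mul, mul_one, Nat.cast_ofNat, sub_zero, pow_one,
    derivative_C, map_zero, zero_mul, zero_add, add_zero, derivative_ofNat] at h1
  norm_num at h1
  have h2 := L_dstar n
  simp only [map_add, map_mul, map_ofNat, map_one, C_eq_natCast] at h1 h2 ⊢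
  linear_combination h1 - ((n : Polynomial ℝ) + 1) * h2

lemma L_zero : Lpoly 0 = 1 := by
  unfold Lpoly Rpoly
  simp

lemma L_one_poly : Lpoly 1 = X := by
  unfold Lpoly Rpoly
  simp only [pow_one, Function.iterate_one, derivative_sub, derivative_one, derivative_X_pow,
    derivative_X]
  norm_num
  rw [← mul_assoc, ← map_mul]
  norm_num

lemma L_eval_one (n : ℕ) : (Lpoly n).eval 1 = 1 := by
  induction n with
  | zero => rw [L_zero]; simp
  | succ n ih =>
    have h := congrArg (eval 1) (L_star n)
    simp only [eval_mul, eval_add, eval_sub, eval_pow, eval_one, eval_X, eval_C, ih] at h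
    norm_num at h
    have hn : ((n:ℝ)+1) ≠ 0 := by positivity
    calc (Lpoly (n+1)).eval 1 = ((n:ℝ)+1) * (Lpoly (n+1)).eval 1 / ((n:ℝ)+1) := by
          field_simp
      _ = 1 := by rw [h]; field_simp

lemma L_eval_negone (n : ℕ) : (Lpoly n).eval (-1) = (-1)^n := by
  induction n with
  | zero => rw [L_zero]; simp
  | succ n ih =>
    have h := congrArg (eval (-1)) (L_star n)
    simp only [eval_mul, eval_add, eval_sub, eval_pow, eval_one, eval_X, eval_C, ih] at h
    norm_num at h
    have hn : ((n:ℝ)+1) ≠ 0 := by positivity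
    have h2 : ((n:ℝ)+1) * (Lpoly (n+1)).eval (-1) = ((n:ℝ)+1) * (-1)^(n+1) := by
      rw [h]; ring
    exact mul_left_cancel₀ hn h2

lemma abs_L_le (n : ℕ) {x : ℝ} (hx : x ∈ Set.Icc (-1:ℝ) 1) : |(Lpoly n).eval x| ≤ 1 := by
  rcases Nat.eq_zero_or_pos n with h0 | hpos
  · subst h0; rw [L_zero]; simp
  have hn0 : (0:ℝ) < (n:ℝ) := by exact_mod_cast hpos
  set lam : ℝ := (n:ℝ)*((n:ℝ)+1) with hlamdef
  have hlam : 0 < lam := by positivity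
  set F : Polynomial ℝ :=
    (Lpoly n)^2 + C (1/lam) * ((1 - X^2) * (derivative (Lpoly n))^2) with hF
  have hCinv : C (1/lam) * C lam = 1 := by
    rw [← map_mul]
    rw [show (1/lam) * lam = 1 by field_simp]
    exact map_one C
  have hF' : derivative F = C (1/lam) * (C 2 * (X * (derivative (Lpoly n))^2)) := by
    have hode := ode n
    rw [hF]
    simp only [derivative_add, derivative_C_mul, derivative_mul, derivative_pow, derivative_sub,
      derivative_one, derivative_X_pow, derivative_X, map_ofNat, pow_one, mul_one, one_mul,
      Nat.cast_ofNat, zero_sub, zero_mul, zero_add, sub_zero, map_zero, derivative_C] at hode ⊢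
    linear_combination (2 * C (1/lam) * derivative (Lpoly n)) * hode
      - (2 * Lpoly n * derivative (Lpoly n)) * hCinv
  have hF1 : F.eval 1 = 1 := by
    rw [hF]
    simp [L_eval_one]
  have hFneg1 : F.eval (-1) = 1 := by
    rw [hF]
    simp only [eval_add, eval_mul, eval_pow, eval_sub, eval_one, eval_X, eval_C, L_eval_negone]
    have : ((-1:ℝ)^n)^2 = 1 := by
      rcases Nat.even_or_odd n with h | h
      · rw [h.neg_one_pow]; norm_num
      · rw [h.neg_one_pow]; norm_num
    rw [this]; ring
  have hdF : ∀ y : ℝ, _root_.deriv (fun t => F.eval t) y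
      = (1/lam) * (2 * (y * ((derivative (Lpoly n)).eval y)^2)) := by
    intro y
    rw [Polynomial.deriv, hF']
    simp [eval_mul, eval_C, eval_X, eval_pow]
  have hkey : F.eval x ≤ 1 := by
    rcases le_or_gt 0 x with hx0 | hx0
    · have hmono : MonotoneOn (fun t => F.eval t) (Set.Icc (0:ℝ) 1) := by
        apply monotoneOn_of_deriv_nonneg (convex_Icc 0 1)
          (F.continuous.continuousOn)
        · exact (F.differentiable).differentiableOn
        · intro y hy
          rw [interior_Icc] at hy
          rw [hdF]
          have : (0:ℝ) ≤ y := le_of_lt hy.1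
          positivity
      have := hmono ⟨hx0, hx.2⟩ (Set.mem_Icc.2 ⟨zero_le_one, le_refl 1⟩) hx.2
      simpa [hF1] using this
    · have hanti : AntitoneOn (fun t => F.eval t) (Set.Icc (-1:ℝ) 0) := by
        apply antitoneOn_of_deriv_nonpos (convex_Icc (-1) 0)
          (F.continuous.continuousOn)
        · exact (F.differentiable).differentiableOn
        · intro y hy
          rw [interior_Icc] at hy
          rw [hdF]
          have hyneg : y ≤ 0 := le_of_lt hy.2
          have h1 : y * ((derivative (Lpoly n)).eval y)^2 ≤ 0 :=
            mul_nonpos_of_nonpos_of_nonneg hyneg (sq_nonneg _)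
          have h2 : (0:ℝ) ≤ 1/lam := by positivity
          nlinarith
      have := hanti (Set.mem_Icc.2 ⟨le_refl (-1:ℝ), by norm_num⟩) ⟨hx.1, le_of_lt hx0⟩ hx.1
      simpa [hFneg1] using this
  have hsq : ((Lpoly n).eval x)^2 ≤ F.eval x := by
    rw [hF]
    simp only [eval_add, eval_mul, eval_pow, eval_sub, eval_one, eval_X, eval_C]
    have h1 : (0:ℝ) ≤ 1 - x^2 := by nlinarith [hx.1, hx.2]
    have h2 : (0:ℝ) ≤ 1/lam := by positivity
    nlinarith [mul_nonneg h2 (mul_nonneg h1 (sq_nonneg ((derivative (Lpoly n)).eval x)))]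
  have : ((Lpoly n).eval x)^2 ≤ 1 := hsq.trans hkey
  rw [abs_le]
  constructor <;> nlinarith [this]

lemma B_id (n : ℕ) :
    derivative (Lpoly (n+2)) = derivative (Lpoly n) + C (2*(n:ℝ)+3) * Lpoly (n+1) := by
  have h1 := L_dstar (n+1)
  have h2 := L_dstar n
  have h3 := L_star n
  simp only [Nat.cast_succ, map_add, map_mul, map_ofNat, map_one] at h1 h2 h3 ⊢
  linear_combination h1 + X * h2 - h3

lemma dL_bound : ∀ (n : ℕ) {x : ℝ}, x ∈ Set.Icc (-1:ℝ) 1 →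
    |(derivative (Lpoly n)).eval x| ≤ (n:ℝ)*((n:ℝ)+1)/2 := by
  intro n
  induction n using Nat.strong_induction_on with
  | _ n ih =>
    match n with
    | 0 => intro x _; rw [L_zero]; simp
    | 1 => intro x _; rw [L_one_poly]; simp
    | (m+2) =>
      intro x hx
      have h1 := ih m (by omega) hx
      have h2 := abs_L_le (m+1) hx
      have h3 := congrArg (eval x) (B_id m)
      simp only [eval_add, eval_mul, eval_C] at h3
      rw [h3]
      have habs : |(derivative (Lpoly m)).eval x + (2*(m:ℝ)+3) * (Lpoly (m+1)).eval x|
          ≤ |(derivative (Lpoly m)).eval x| + (2*(m:ℝ)+3) * |(Lpoly (m+1)).eval x| := by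
        calc _ ≤ |(derivative (Lpoly m)).eval x| + |(2*(m:ℝ)+3) * (Lpoly (m+1)).eval x| :=
              abs_add_le _ _
          _ = _ := by rw [abs_mul, abs_of_nonneg (by positivity : (0:ℝ) ≤ 2*(m:ℝ)+3)]
      have hm3 : (0:ℝ) ≤ 2*(m:ℝ)+3 := by positivity
      have := mul_le_mul_of_nonneg_left h2 hm3
      push_cast
      push_cast at h1
      nlinarith [habs]

lemma L_diff (n : ℕ) :
    C (((n:ℝ)+1)*((n:ℝ)+2)) * (Lpoly n - Lpoly (n+2)) =
      C (2*(n:ℝ)+3) * ((1 - X^2) * derivative (Lpoly (n+1))) := by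
  have s1 := L_star (n+1)
  have h2 := L_dstar n
  have h3 := L_star n
  simp only [Nat.cast_succ, map_add, map_mul, map_ofNat, map_one] at s1 h2 h3 ⊢
  linear_combination (-(C (n:ℝ) + 1)) * s1 + ((C (n:ℝ) + 2) * (X^2 - 1)) * h2
    + (-((C (n:ℝ) + 2) * X)) * h3

lemma term_bound (k : ℕ) {x : ℝ} (hx : x ∈ Set.Icc (-1:ℝ) 1) :
    (Lpoly (2*k)).eval x - (Lpoly (2*k+2)).eval x ≤ (4*(k:ℝ)+3) * (1 - x^2) / 2 := by
  have h := congrArg (eval x) (L_diff (2*k))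
  simp only [eval_mul, eval_sub, eval_add, eval_one, eval_pow, eval_X, eval_C] at h
  have hd := dL_bound (2*k+1) hx
  have hx2 : (0:ℝ) ≤ 1 - x^2 := by nlinarith [hx.1, hx.2]
  have hpos : (0:ℝ) < (2*(k:ℝ)+1)*(2*(k:ℝ)+2) := by positivity
  -- h : (2k+1)(2k+2) (L_{2k}(x) - L_{2k+2}(x)) = (4k+3)(1-x²) DL_{2k+1}(x)
  have hcast : ((2*k : ℕ):ℝ) = 2*(k:ℝ) := by push_cast; ring
  rw [hcast] at h
  have hdl : (derivative (Lpoly (2*k+1))).eval x ≤ (2*(k:ℝ)+1)*(2*(k:ℝ)+2)/2 := by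
    have := (abs_le.1 hd).2
    push_cast at this
    nlinarith [this]
  have h43 : (0:ℝ) ≤ (2*(2*(k:ℝ))+3) * (1 - x^2) := by positivity
  have hstep := mul_le_mul_of_nonneg_left hdl h43
  nlinarith [hstep, h, hpos]

lemma telescope (l : ℕ) {x : ℝ} (hx : x ∈ Set.Icc (-1:ℝ) 1) :
    1 - (Lpoly (2*l)).eval x ≤ (l:ℝ)*(2*(l:ℝ)+1) * (1 - x^2) / 2 := by
  induction l with
  | zero => rw [L_zero]; norm_num
  | succ l ih =>
    have hterm := term_bound l hx
    have h2 : 2*(l+1) = 2*l+2 := by ring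
    rw [h2]
    have : 1 - (Lpoly (2*l+2)).eval x
        = (1 - (Lpoly (2*l)).eval x) + ((Lpoly (2*l)).eval x - (Lpoly (2*l+2)).eval x) := by ring
    rw [this]
    push_cast
    nlinarith [ih, hterm]

lemma L_two (x : ℝ) : (Lpoly 2).eval x = (3*x^2 - 1)/2 := by
  have hR : Rpoly 2 = 12 * X^2 - 4 := by
    unfold Rpoly
    have : (((X:Polynomial ℝ)^2-1)^2) = X^4 - 2*X^2 + 1 := by ring
    rw [this]
    show derivative (derivative (X^4 - 2*X^2+1)) = _
    simp
    rw [map_ofNat C 3, map_ofNat C 2]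
    ring
  unfold Lpoly
  rw [hR]
  simp only [eval_mul, eval_sub, eval_C, eval_pow, eval_X, eval_ofNat]
  norm_num
  ring

end LegendreAux

/-- For every `ℓ ≥ 1` and `x ∈ [-1,1]`,
`(1 - P_{2ℓ}(x)) / (2ℓ(2ℓ+1)) ≤ (1 - P₂(x)) / 6`. -/
theorem legendre_eigenvalue_inequality
    (ℓ : ℕ) (hℓ : 1 ≤ ℓ) (x : ℝ) (hx : x ∈ Set.Icc (-1 : ℝ) 1) :
    (1 - legendreP (2 * ℓ) x) / ((2 * ℓ : ℝ) * (2 * ℓ + 1)) ≤ (1 - legendreP 2 x) / 6 := by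
  have h2 : legendreP 2 x = (3*x^2 - 1)/2 := by
    rw [LegendreAux.legendreP_eq, LegendreAux.L_two]
  have hmain : 1 - legendreP (2*ℓ) x ≤ (ℓ:ℝ)*(2*(ℓ:ℝ)+1) * (1 - x^2) / 2 := by
    rw [LegendreAux.legendreP_eq]
    exact LegendreAux.telescope ℓ hx
  have hl1 : (1:ℝ) ≤ (ℓ:ℝ) := by exact_mod_cast hℓ
  have hD : (0:ℝ) < (2 * ℓ : ℝ) * (2 * ℓ + 1) := by positivity
  rw [div_le_div_iff₀ hD (by norm_num : (0:ℝ) < 6), h2]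
  nlinarith [hmain, hl1, sq_nonneg x]
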